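/- Let F be an algebraically closed field of characteristic p > 2, m,n,t ≥ 1, λ_i, κ_j ∈ F nonzero with |λ| = λ_1^{p−1} = ⋯ = κ_n^{p−1}, and μ ∈ F^{2m+2}. In the restricted twisted Heisenberg Lie superalgebra h^{λ,κ,μ}_{m,n,t} with [p]-operator P, the set { f : L → F : there exists an F-linear ψ : V → F with ψ([x,y]) = 0 for all x,y ∈ V and f(g) = ψ(P(g)) for all g ∈ L } equals the one-dimensional F-span of the Frobenius homomorphism ē^{2m+2} : Σ_{i} a_i e_i ↦ a_{2m+2}^p. (This computes the image of the map D : H¹ → Hom_Fr(L,F), D_ψ(g) = ψ(g^{[p]}), in Hochschild's six-term exact sequence: im(D) = F·ē^{2m+2}.) -/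

import Mathlib

attribute [local instance 100] LieRing.ofAssociativeRing

/-- In the restricted twisted Heisenberg Lie superalgebra
`h^{λ,κ,μ}_{m,n,t}` (setup 0-indexed as in the paper, `P` the `[p]`-operator of
formula (res)), the set of maps `f : L → F` of the form `f(g) = ψ(P g)` for some
linear 1-cocycle `ψ : V → F` (i.e. `ψ` vanishing on all super-bracket values) is
exactly the line `F · ē^{2m+2}`, where `ē^{2m+2}(Σ a_i e_i) = a_{2m+2}^p`.
This computes `im(D) = F·ē^{2m+2}` for the map `D : H¹ → Hom_Fr(L,F)` of
Hochschild's six-term exact sequence. -/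
theorem stmt_10
    (F : Type*) [Field F] [IsAlgClosed F]
    (p : ℕ) [Fact (Nat.Prime p)] [CharP F p] (hp2 : 2 < p)
    (m n t : ℕ) (hm : 1 ≤ m) (hn : 1 ≤ n) (ht : 1 ≤ t)
    (lam kap : ℕ → F) (hlam : ∀ i, i < m → lam i ≠ 0) (hkap : ∀ j, j < n → kap j ≠ 0)
    (hlameq : ∀ i, i < m → lam i ^ (p-1) = lam 0 ^ (p-1))
    (hkapeq : ∀ j, j < n → kap j ^ (p-1) = lam 0 ^ (p-1))
    (mu : ℕ → F)
    (L : Type*) [LieRing L] [LieAlgebra F L]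
    (b : Module.Basis (Fin (2*m+2)) F L)
    (e : ℕ → L) (he : ∀ i : Fin (2*m+2), e (i : ℕ) = b i)
    (hbr : ∀ i j : ℕ, i < 2*m+2 → j < 2*m+2 →
      ⁅e i, e j⁆ =
        if i < m ∧ j = m + i then e (2*m)
        else if j < m ∧ i = m + j then - e (2*m)
        else if i = 2*m+1 ∧ j < m then lam j • e (m + j)
        else if i = 2*m+1 ∧ m ≤ j ∧ j < 2*m then lam (j-m) • e (j-m)
        else if j = 2*m+1 ∧ i < m then - (lam i • e (m + i))
        else if j = 2*m+1 ∧ m ≤ i ∧ i < 2*m then - (lam (i-m) • e (i-m))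
        else 0)
    (ρ : L →ₗ⁅F⁆ Module.End F (Fin (2*n+t) → F))
    (hρ0 : ∀ i, i < 2*m+1 → ρ (e i) = 0)
    (hρ1 : ∀ (v : Fin (2*n+t) → F) (i : Fin (2*n+t)),
      ρ (e (2*m+1)) v i =
        if h1 : (i : ℕ) < n then kap i * v ⟨(i : ℕ) + n, by omega⟩
        else if h2 : (i : ℕ) < 2*n then
          kap ((i : ℕ) - n) * v ⟨(i : ℕ) - n, by have := i.isLt; omega⟩
        else 0)
    (Br : L × (Fin (2*n+t) → F) → L × (Fin (2*n+t) → F) → L × (Fin (2*n+t) → F))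
    (hBr : ∀ (x y : L) (u v : Fin (2*n+t) → F),
      Br (x, u) (y, v) =
        (⁅x, y⁆ +
          ((∑ j : Fin n, u ⟨(j : ℕ), by have := j.isLt; omega⟩
              * v ⟨(j : ℕ), by have := j.isLt; omega⟩)
           - (∑ j : Fin n, u ⟨n + (j : ℕ), by have := j.isLt; omega⟩
              * v ⟨n + (j : ℕ), by have := j.isLt; omega⟩)
           + (∑ k : Fin t, u ⟨2*n + (k : ℕ), by have := k.isLt; omega⟩
              * v ⟨2*n + (k : ℕ), by have := k.isLt; omega⟩)) • e (2*m),
         ρ x v - ρ y u))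
    (P : L → L)
    (hP : ∀ a : ℕ → F,
      P (∑ i ∈ Finset.range (2*m+2), a i • e i) =
        (a (2*m+1) ^ (p-1) * lam 0 ^ (p-1)) • (∑ i ∈ Finset.range (2*m), a i • e i)
        + (a (2*m+1) ^ p * lam 0 ^ (p-1)) • e (2*m+1)
        + ((∑ i ∈ Finset.range (2*m+2), a i ^ p * mu i)
            + (2 : F)⁻¹ * a (2*m+1) ^ (p-2)
              * (∑ i ∈ Finset.range m, lam i ^ (p-2) * (a i ^ 2 - a (m+i) ^ 2)))
          • e (2*m)) :
    {f : L → F | ∃ ψ : (L × (Fin (2*n+t) → F)) →ₗ[F] F,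
        (∀ x y, ψ (Br x y) = 0) ∧ ∀ g : L, f g = ψ (P g, 0)}
      = Set.range (fun c : F => (fun g : L => c * (b.repr g ⟨2*m+1, by omega⟩) ^ p)) := by
  classical
  have hLne : lam 0 ^ (p-1) ≠ 0 := pow_ne_zero _ (hlam 0 (by omega))
  have heb : ∀ (k : ℕ) (h : k < 2*m+2), e k = b ⟨k, h⟩ := fun k h => he ⟨k, h⟩
  have hdecomp : ∀ (g : L) (a : ℕ → F),
      (∀ (i : ℕ) (h : i < 2*m+2), a i = b.repr g ⟨i, h⟩) →
      ∑ i ∈ Finset.range (2*m+2), a i • e i = g := by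
    intro g a hag
    rw [← Fin.sum_univ_eq_sum_range]
    have h1 : ∀ i : Fin (2*m+2), a (i : ℕ) • e (i : ℕ) = b.repr g i • b i := by
      intro i
      rw [he i, hag (i : ℕ) i.isLt]
    rw [Finset.sum_congr rfl fun i _ => h1 i]
    exact b.sum_repr g
  have sum_lie' : ∀ (s : Finset (Fin (2*m+2))) (f : Fin (2*m+2) → L) (z : L),
      ⁅∑ i ∈ s, f i, z⁆ = ∑ i ∈ s, ⁅f i, z⁆ := by
    intro s f z
    induction s using Finset.induction_on with
    | empty => simp
    | @insert _ _ h ih => rw [Finset.sum_insert h, Finset.sum_insert h, add_lie, ih]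
  have lie_sum' : ∀ (s : Finset (Fin (2*m+2))) (f : Fin (2*m+2) → L) (z : L),
      ⁅z, ∑ i ∈ s, f i⁆ = ∑ i ∈ s, ⁅z, f i⁆ := by
    intro s f z
    induction s using Finset.induction_on with
    | empty => simp
    | @insert _ _ h ih => rw [Finset.sum_insert h, Finset.sum_insert h, lie_add, ih]
  apply Set.eq_of_subset_of_subset
  · -- forward inclusion
    rintro f ⟨ψ, hψbr, hf⟩
    set φ : L →ₗ[F] F := ψ.comp (LinearMap.inl F L (Fin (2*n+t) → F)) with hφdef
    have hφ : ∀ x : L, φ x = ψ (x, 0) := fun x => rfl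
    have hφbr : ∀ x y : L, φ ⁅x, y⁆ = 0 := by
      intro x y
      have h := hψbr (x, 0) (y, 0)
      rw [hBr] at h
      simpa [hφ] using h
    have hφ0 : ∀ k : ℕ, k < 2*m+1 → φ (e k) = 0 := by
      intro k hk
      by_cases hk1 : k < m
      · have hb := hbr (2*m+1) (m+k) (by omega) (by omega)
        rw [if_neg (by omega), if_neg (by omega), if_neg (by omega),
          if_pos (by omega : 2*m+1 = 2*m+1 ∧ m ≤ m+k ∧ m+k < 2*m)] at hb
        rw [show m + k - m = k from by omega] at hb
        have h0 := hφbr (e (2*m+1)) (e (m+k))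
        rw [hb, map_smul, smul_eq_mul] at h0
        exact (mul_eq_zero.mp h0).resolve_left (hlam k hk1)
      · by_cases hk2 : k < 2*m
        · have hb := hbr (2*m+1) (k-m) (by omega) (by omega)
          rw [if_neg (by omega), if_neg (by omega),
            if_pos (by omega : 2*m+1 = 2*m+1 ∧ k-m < m)] at hb
          rw [show m + (k - m) = k from by omega] at hb
          have h0 := hφbr (e (2*m+1)) (e (k-m))
          rw [hb, map_smul, smul_eq_mul] at h0
          exact (mul_eq_zero.mp h0).resolve_left (hlam (k-m) (by omega))
        · have hb := hbr 0 m (by omega) (by omega)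
          rw [if_pos (by omega : 0 < m ∧ m = m + 0)] at hb
          have h0 := hφbr (e 0) (e m)
          rw [hb] at h0
          rw [show k = 2*m from by omega]
          exact h0
    refine ⟨lam 0 ^ (p-1) * φ (e (2*m+1)), funext fun g => ?_⟩
    set a : ℕ → F := fun i => if h : i < 2*m+2 then b.repr g ⟨i, h⟩ else 0 with hadef
    have hg : ∑ i ∈ Finset.range (2*m+2), a i • e i = g :=
      hdecomp g a (fun i h => dif_pos h)
    have ha : a (2*m+1) = b.repr g ⟨2*m+1, by omega⟩ := dif_pos (by omega)
    have hPg : φ (P g) =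
        lam 0 ^ (p-1) * φ (e (2*m+1)) * (b.repr g ⟨2*m+1, by omega⟩) ^ p := by
      conv_lhs => rw [← hg]
      rw [hP a]
      have hs1 : φ (∑ i ∈ Finset.range (2*m), a i • e i) = 0 := by
        rw [map_sum]
        refine Finset.sum_eq_zero fun i hi => ?_
        have hi' := Finset.mem_range.mp hi
        rw [map_smul, hφ0 i (by omega), smul_zero]
      rw [map_add, map_add, map_smul, map_smul, map_smul, hs1, smul_zero, zero_add,
        hφ0 (2*m) (by omega), smul_zero, add_zero, smul_eq_mul, ha]
      ring
    have hfg : f g = φ (P g) := hf g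
    rw [hfg, hPg]
  · -- reverse inclusion
    rintro f ⟨c, rfl⟩
    set c21 : L →ₗ[F] F := b.coord ⟨2*m+1, by omega⟩ with hc21def
    have hc : ∀ (k : ℕ), k < 2*m+1 → c21 (e k) = 0 := by
      intro k hk
      rw [heb k (by omega)]
      simp only [hc21def, Module.Basis.coord_apply, Module.Basis.repr_self, Finsupp.single_apply,
        Fin.mk.injEq]
      rw [if_neg (by omega)]
    have hc1 : c21 (e (2*m+1)) = 1 := by
      rw [heb (2*m+1) (by omega)]
      simp [hc21def, Module.Basis.coord_apply, Module.Basis.repr_self, Finsupp.single_apply]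
    have hA : ∀ i j : Fin (2*m+2), c21 ⁅(b i : L), b j⁆ = 0 := by
      intro i j
      rw [← he i, ← he j, hbr (i : ℕ) (j : ℕ) i.isLt j.isLt]
      split_ifs with h1 h2 h3 h4 h5 h6
      · exact hc _ (by omega)
      · rw [map_neg, hc _ (by omega), neg_zero]
      · rw [map_smul, hc _ (by omega), smul_zero]
      · rw [map_smul, hc _ (by omega), smul_zero]
      · rw [map_neg, map_smul, hc _ (by omega), smul_zero, neg_zero]
      · rw [map_neg, map_smul, hc _ (by omega), smul_zero, neg_zero]
      · exact map_zero _
    have hB : ∀ x y : L, c21 ⁅x, y⁆ = 0 := by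
      intro x y
      conv_lhs => rw [← b.sum_repr x, ← b.sum_repr y]
      rw [sum_lie', map_sum]
      refine Finset.sum_eq_zero fun i _ => ?_
      rw [smul_lie, map_smul, lie_sum', map_sum]
      rw [Finset.sum_congr rfl fun j _ => by rw [lie_smul, map_smul, hA i j, smul_zero]]
      simp
    refine ⟨(c * (lam 0 ^ (p-1))⁻¹) •
      (c21.comp (LinearMap.fst F L (Fin (2*n+t) → F))), ?_, ?_⟩
    · rintro ⟨x, u⟩ ⟨y, v⟩
      rw [hBr]
      simp only [LinearMap.smul_apply, LinearMap.comp_apply, LinearMap.fst_apply,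
        map_add, map_smul, hB x y, hc (2*m) (by omega), smul_zero, add_zero, zero_add,
        smul_eq_mul, mul_zero]
    · intro g
      set a : ℕ → F := fun i => if h : i < 2*m+2 then b.repr g ⟨i, h⟩ else 0 with hadef
      have hg : ∑ i ∈ Finset.range (2*m+2), a i • e i = g :=
        hdecomp g a (fun i h => dif_pos h)
      have ha : a (2*m+1) = b.repr g ⟨2*m+1, by omega⟩ := dif_pos (by omega)
      have hPg : c21 (P g) = (b.repr g ⟨2*m+1, by omega⟩) ^ p * lam 0 ^ (p-1) := by
        conv_lhs => rw [← hg]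
        rw [hP a]
        have hs1 : c21 (∑ i ∈ Finset.range (2*m), a i • e i) = 0 := by
          rw [map_sum]
          refine Finset.sum_eq_zero fun i hi => ?_
          have hi' := Finset.mem_range.mp hi
          rw [map_smul, hc i (by omega), smul_zero]
        rw [map_add, map_add, map_smul, map_smul, map_smul, hs1, smul_zero, zero_add,
          hc1, hc (2*m) (by omega), smul_zero, add_zero, smul_eq_mul, mul_one, ha]
      simp only [LinearMap.smul_apply, LinearMap.comp_apply, LinearMap.fst_apply,
        smul_eq_mul]
      rw [hPg]
      field_simp
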